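/- Let G be connected with m > n (i.e. G has at least two cycles). Then the algebraic multiplicity of 1 as an eigenvalue of B (its multiplicity as a root of the characteristic polynomial of B) equals m − n + 1. -/

import Mathlib

/-!
Write `B = S Tᵀ - τ`, where `S`, `T` are the dart–tail and dart–head incidence matrices and `τ`
is the permutation matrix of dart reversal. Since `τ² = 1`, `τ S = T`, `Tᵀ S = A` and `Tᵀ T = D`,
multiplying `tI - B` by `tI - τ` and applying Sylvester's determinant identity gives the
Ihara–Bass formula `χ_B(t) = (t² - 1)^(m - n) det H(t)` with `H(t) = t²I - tA + D - I`; here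
`det (tI - τ) = (t² - 1)^m` because a fixed-point-free involution is conjugate to its negative by
a diagonal sign matrix.

The column sums of `H(t)` are `(t - 1)(t + 1 - deg u)`, so `det H(t) = (t - 1) det H'(t)` where
`H'(t)` has one row replaced by `t + 1 - deg u`. Now `H'(1)` is the Laplacian with one row replaced
by `2 - deg u`. A kernel vector of it is killed by the whole Laplacian (the entries of `L y` sum
to zero), hence is constant on the connected graph, and the replaced row then forces it to vanish
because `∑ (2 - deg u) = 2(n - m) ≠ 0`. So `1` is a root of `χ_B` of multiplicity `m - n + 1`.
-/

open Matrix Polynomial BigOperators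

variable {V : Type*}

/-- The non-backtracking matrix of a graph `G`, indexed by darts (oriented edges):
`B[(k→l),(i→j)] = 1` if `j = k` and `i ≠ l`, else `0`. -/
def nbMatrix [DecidableEq V] (G : SimpleGraph V) : Matrix G.Dart G.Dart ℂ :=
  fun e f => if f.snd = e.fst ∧ f.fst ≠ e.snd then 1 else 0

namespace Polynomial

theorem Monic.eq_of_sq_eq_sq {R : Type*} [CommRing R] [IsDomain R] [NeZero (2 : R)]
    {p q : R[X]} (hp : p.Monic) (hq : q.Monic) (h : p ^ 2 = q ^ 2) : p = q := by
  refine (sq_eq_sq_iff_eq_or_eq_neg.mp h).resolve_right fun hpq => NeZero.ne (2 : R) ?_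
  have h1 := hp.leadingCoeff
  rw [hpq, leadingCoeff_neg, hq.leadingCoeff] at h1
  linear_combination -h1

theorem rootMultiplicity_one_X_sq_sub_one_pow_mul {R : Type*} [CommRing R] [IsDomain R]
    [NeZero (2 : R)] {q : R[X]} (hq : q.eval 1 ≠ 0) (k : ℕ) :
    rootMultiplicity 1 ((X ^ 2 - 1) ^ k * ((X - 1) * q)) = k + 1 := by
  have hfac : (X ^ 2 - 1 : R[X]) ^ k * ((X - 1) * q) = ((X + 1) ^ k * q) * (X - C 1) ^ (k + 1) := by
    rw [C_1, show (X ^ 2 - 1 : R[X]) = (X + 1) * (X - 1) by ring, mul_pow]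
    ring
  have hroot : eval 1 ((X + 1) ^ k * q) ≠ 0 := by
    rw [eval_mul, eval_pow, eval_add, eval_X, eval_one, one_add_one_eq_two]
    exact mul_ne_zero (pow_ne_zero _ two_ne_zero) hq
  rw [hfac, rootMultiplicity_mul_X_sub_C_pow (fun h => hroot (by rw [h, eval_zero])),
    rootMultiplicity_eq_zero hroot, zero_add]

end Polynomial

namespace Matrix

variable {ι R : Type*} [Fintype ι] [DecidableEq ι] [CommRing R]

theorem charpoly_mul_charpoly_neg_of_mul_self_eq_one {M : Matrix ι ι R} (hM : M * M = 1) :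
    M.charpoly * (-M).charpoly = (X ^ 2 - 1) ^ Fintype.card ι := by
  set N := (C : R →+* R[X]).mapMatrix M
  have hN : N * N = 1 := by rw [← map_mul, hM, map_one]
  have hXN : scalar ι (X : R[X]) * N = N * scalar ι X :=
    scalar_commute _ (fun _ => Commute.all _ _) _
  have : charmatrix M * charmatrix (-M) = scalar ι (X ^ 2 - 1 : R[X]) := by
    calc charmatrix M * charmatrix (-M) = (scalar ι X - N) * (scalar ι X + N) := by
          simp only [charmatrix, N, map_neg, sub_neg_eq_add]
      _ = scalar ι X * scalar ι X - N * N + (scalar ι X * N - N * scalar ι X) := by noncomm_ring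
      _ = scalar ι (X ^ 2 - 1 : R[X]) := by
          rw [hN, hXN, sub_self, add_zero, ← map_mul, ← map_one (scalar ι), ← map_sub, sq]
  rw [charpoly, charpoly, ← det_mul, this, scalar_apply, det_diagonal, Finset.prod_const,
    Finset.card_univ]

theorem charpoly_neg_permMatrix_of_involutive {σ : Equiv.Perm ι} (hσ : Function.Involutive σ)
    (hfree : ∀ i, σ i ≠ i) : (-σ.permMatrix R).charpoly = (σ.permMatrix R).charpoly := by
  let e := Fintype.equivFin ι
  -- an orientation of the orbits of `σ`
  let ε : ι → R := fun i => if e i < e (σ i) then 1 else -1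
  have hε_sq (i : ι) : ε i * ε i = 1 := by simp only [ε]; split_ifs <;> norm_num
  have hε_σ (i : ι) : ε (σ i) = -ε i := by
    have hne : e i ≠ e (σ i) := fun h => hfree i (e.injective h).symm
    simp only [ε, hσ i]
    rcases hne.lt_or_gt with h | h
    · simp [h, h.not_gt]
    · simp [h, h.not_gt]
  have hDD : diagonal ε * diagonal ε = 1 := by
    rw [diagonal_mul_diagonal, ← diagonal_one]; exact congrArg diagonal (funext hε_sq)
  have hconj : diagonal ε * σ.permMatrix R * diagonal ε = -σ.permMatrix R := by
    ext i j
    rw [mul_diagonal, diagonal_mul, neg_apply]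
    simp only [PEquiv.toMatrix_apply, Equiv.toPEquiv_apply, Option.mem_def, Option.some.injEq]
    split_ifs with h
    · rw [← h, hε_σ, mul_one, mul_neg, hε_sq]
    · simp
  rw [← hconj, charpoly_mul_comm, ← mul_assoc, hDD, one_mul]

theorem charpoly_permMatrix_of_involutive [IsDomain R] [NeZero (2 : R)] {σ : Equiv.Perm ι}
    (hσ : Function.Involutive σ) (hfree : ∀ i, σ i ≠ i) {k : ℕ} (hk : Fintype.card ι = 2 * k) :
    (σ.permMatrix R).charpoly = (X ^ 2 - 1) ^ k := by
  have hsq : σ.permMatrix R * σ.permMatrix R = 1 := by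
    rw [← permMatrix_mul, show σ * σ = 1 from Equiv.ext hσ, permMatrix_one]
  refine (charpoly_monic _).eq_of_sq_eq_sq ?_ ?_
  · simpa using (monic_X_pow_sub_C (1 : R) two_ne_zero).pow k
  · rw [sq, ← pow_mul, mul_comm k, ← hk, ← charpoly_mul_charpoly_neg_of_mul_self_eq_one hsq,
      charpoly_neg_permMatrix_of_involutive hσ hfree]

theorem det_scalar_sub_mul_comm {m n : Type*} [Fintype m] [DecidableEq m] [Fintype n]
    [DecidableEq n] (A : Matrix m n R) (B : Matrix n m R) (r : R) :
    r ^ Fintype.card n * (scalar m r - A * B).det =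
      r ^ Fintype.card m * (scalar n r - B * A).det := by
  simpa [eval_charpoly] using congrArg (eval r) (charpoly_mul_comm' A B)

end Matrix

namespace SimpleGraph

theorem sum_two_sub_degree {R : Type*} [CommRing R] [Fintype V] (G : SimpleGraph V)
    [DecidableRel G.Adj] :
    ∑ u, (2 - G.degree u : R) = 2 * (Fintype.card V - G.edgeFinset.card) := by
  rw [Finset.sum_sub_distrib, ← Nat.cast_sum, G.sum_degrees_eq_twice_card_edges]
  simp only [Finset.sum_const, Finset.card_univ, nsmul_eq_mul, Nat.cast_mul, Nat.cast_ofNat]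
  ring

variable [DecidableEq V] (G : SimpleGraph V) (R : Type*)

def dartSymm : Equiv.Perm G.Dart := Function.Involutive.toPerm _ Dart.symm_involutive

def dartTailMatrix [Zero R] [One R] : Matrix G.Dart V R := of fun d v => if d.fst = v then 1 else 0

def dartHeadMatrix [Zero R] [One R] : Matrix G.Dart V R := of fun d v => if d.snd = v then 1 else 0

/-- The vertex-side matrix of the Ihara–Bass formula `det (tI - B) = (t² - 1)^(m - n) det H(t)`. -/
def iharaMatrix [Fintype V] [DecidableRel G.Adj] [CommRing R] (t : R) : Matrix V V R :=
  scalar V (t ^ 2) - t • G.adjMatrix R + (G.degMatrix R - 1)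

section CommRing

variable [Fintype V] [CommRing R]

theorem nbMatrix_map (f : ℂ →+* R) : (nbMatrix G).map f =
    G.dartTailMatrix R * (G.dartHeadMatrix R)ᵀ - G.dartSymm.permMatrix R := by
  ext e d
  simp only [nbMatrix, map_apply, Matrix.sub_apply, mul_apply, dartTailMatrix, dartHeadMatrix,
    transpose_apply, of_apply, boole_mul, Finset.sum_ite_eq, Finset.mem_univ, if_true,
    PEquiv.toMatrix_apply, Equiv.toPEquiv_apply, Option.mem_def, Option.some.injEq, dartSymm,
    Function.Involutive.coe_toPerm, apply_ite f, map_one, map_zero]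
  by_cases h : d.snd = e.fst
  · have : e.symm = d ↔ d.fst = e.snd := by
      simp [Dart.ext_iff, Prod.ext_iff, h, eq_comm]
    simp only [h, true_and, if_true, this]
    by_cases h' : d.fst = e.snd <;> simp [h']
  · have : e.symm ≠ d := by rintro rfl; exact h rfl
    simp [h, this]

variable [DecidableRel G.Adj]

theorem dartSymm_permMatrix_mul_self :
    G.dartSymm.permMatrix R * G.dartSymm.permMatrix R = 1 := by
  rw [← Matrix.permMatrix_mul, show G.dartSymm * G.dartSymm = 1 from Equiv.ext Dart.symm_symm,
    permMatrix_one]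

theorem dartSymm_permMatrix_mul_dartTailMatrix :
    G.dartSymm.permMatrix R * G.dartTailMatrix R = G.dartHeadMatrix R := by
  ext d v
  simp [PEquiv.toMatrix_toPEquiv_mul, dartSymm, dartTailMatrix, dartHeadMatrix]

theorem transpose_dartTailMatrix_mul_dartTailMatrix :
    (G.dartTailMatrix R)ᵀ * G.dartTailMatrix R = G.degMatrix R := by
  ext u v
  simp only [dartTailMatrix, mul_apply, transpose_apply, of_apply, boole_mul, ← ite_and,
    Finset.sum_boole]
  rcases eq_or_ne u v with rfl | huv
  · simp [degMatrix, dart_fst_fiber_card_eq_degree]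
  · rw [degMatrix, diagonal_apply_ne _ huv, Finset.card_eq_zero.mpr, Nat.cast_zero]
    exact Finset.filter_false_of_mem fun d _ h => huv (h.1.symm.trans h.2)

theorem transpose_dartHeadMatrix_mul_dartTailMatrix :
    (G.dartHeadMatrix R)ᵀ * G.dartTailMatrix R = G.adjMatrix R := by
  ext u v
  simp only [dartTailMatrix, dartHeadMatrix, mul_apply, transpose_apply, of_apply, boole_mul,
    ← ite_and, Finset.sum_boole]
  rw [adjMatrix_apply]
  split_ifs with huv
  · rw [Finset.card_eq_one.mpr ⟨⟨(v, u), huv.symm⟩, ?_⟩, Nat.cast_one]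
    ext d
    simp [Dart.ext_iff, Prod.ext_iff, and_comm]
  · rw [Finset.card_eq_zero.mpr, Nat.cast_zero]
    exact Finset.filter_false_of_mem fun d _ h => huv (h.1 ▸ h.2 ▸ d.adj.symm)

theorem transpose_dartHeadMatrix_mul_dartHeadMatrix :
    (G.dartHeadMatrix R)ᵀ * G.dartHeadMatrix R = G.degMatrix R := by
  have hτ : (G.dartSymm.permMatrix R)ᵀ = G.dartSymm.permMatrix R := by
    rw [transpose_permMatrix, Equiv.Perm.inv_def, dartSymm, Function.Involutive.toPerm_symm]
  rw [← dartSymm_permMatrix_mul_dartTailMatrix, transpose_mul, hτ, Matrix.mul_assoc,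
    ← Matrix.mul_assoc _ _ (dartTailMatrix G R), dartSymm_permMatrix_mul_self, Matrix.one_mul,
    transpose_dartTailMatrix_mul_dartTailMatrix]

theorem det_scalar_sub_mul_det_scalar_sub_dartSymm (t : R) :
    (t ^ 2 - 1) ^ Fintype.card V * ((scalar G.Dart t -
      (G.dartTailMatrix R * (G.dartHeadMatrix R)ᵀ - G.dartSymm.permMatrix R)).det *
      (scalar G.Dart t - G.dartSymm.permMatrix R).det) =
    (t ^ 2 - 1) ^ Fintype.card G.Dart * (G.iharaMatrix R t).det := by
  set S := G.dartTailMatrix R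
  set T := G.dartHeadMatrix R
  set τ := G.dartSymm.permMatrix R
  set s := scalar G.Dart t with hs
  have hτs : τ * s = s * τ := (scalar_commute _ (fun _ => Commute.all _ _) _).symm
  have hfactor (N : Matrix G.Dart G.Dart R) :
      (s - (N - τ)) * (s - τ) = scalar G.Dart (t ^ 2 - 1) - N * (s - τ) := by
    calc _ = s * s - τ * τ - N * (s - τ) + (τ * s - s * τ) := by noncomm_ring
      _ = _ := by rw [hτs, sub_self, add_zero, G.dartSymm_permMatrix_mul_self, ← map_mul,
        ← map_one (scalar G.Dart), ← map_sub, sq]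
  have hsS : s * S = t • S := by
    rw [hs, scalar_apply, ← smul_one_eq_diagonal, Matrix.smul_mul, Matrix.one_mul]
  have hswap : Tᵀ * (s - τ) * S = t • G.adjMatrix R - G.degMatrix R := by
    rw [Matrix.mul_sub, Matrix.sub_mul, Matrix.mul_assoc, Matrix.mul_assoc,
      G.dartSymm_permMatrix_mul_dartTailMatrix, G.transpose_dartHeadMatrix_mul_dartHeadMatrix,
      hsS, Matrix.mul_smul, G.transpose_dartHeadMatrix_mul_dartTailMatrix]
  rw [← det_mul, hfactor, Matrix.mul_assoc, det_scalar_sub_mul_comm, hswap]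
  congr 2
  simp only [iharaMatrix, map_sub, map_pow, map_one]
  abel

theorem sum_iharaMatrix_apply (t : R) (u : V) :
    ∑ v, G.iharaMatrix R t v u = (t - 1) * (t + 1 - G.degree u) := by
  simp only [iharaMatrix, Matrix.add_apply, Matrix.sub_apply, Matrix.smul_apply, smul_eq_mul,
    Finset.sum_add_distrib, Finset.sum_sub_distrib, ← Finset.mul_sum, scalar_apply, degMatrix,
    diagonal_apply, one_apply, Finset.sum_ite_eq', Finset.mem_univ, if_true, adjMatrix_apply,
    G.adj_comm _ u, ← degree_eq_sum_if_adj]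
  ring

theorem det_iharaMatrix (t : R) (v₀ : V) : (G.iharaMatrix R t).det =
    (t - 1) * ((G.iharaMatrix R t).updateRow v₀ fun u => t + 1 - G.degree u).det := by
  have hrows : ∑ v, (1 : R) • G.iharaMatrix R t v = (t - 1) • fun u => t + 1 - G.degree u := by
    ext u
    simp only [one_smul]
    exact (Finset.sum_apply u _ _).trans (G.sum_iharaMatrix_apply R t u)
  rw [← det_updateRow_smul, ← hrows, det_updateRow_sum, one_smul]

theorem map_iharaMatrix {S : Type*} [CommRing S] (f : R →+* S) (t : R) :
    (G.iharaMatrix R t).map f = G.iharaMatrix S (f t) := by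
  ext u v
  simp [iharaMatrix, adjMatrix_apply, degMatrix, diagonal_apply, apply_ite f, one_apply]

theorem iharaMatrix_one : G.iharaMatrix R 1 = G.lapMatrix R := by
  simp only [iharaMatrix, one_pow, map_one, one_smul, lapMatrix]
  abel

theorem map_det_updateRow_iharaMatrix {S : Type*} [CommRing S] (f : R →+* S) (t : R) (v₀ : V) :
    f ((G.iharaMatrix R t).updateRow v₀ fun u => t + 1 - G.degree u).det =
      ((G.iharaMatrix S (f t)).updateRow v₀ fun u => f t + 1 - G.degree u).det := by
  rw [RingHom.map_det, RingHom.mapMatrix_apply, map_updateRow, map_iharaMatrix]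
  congr
  ext u
  simp

end CommRing

section

variable [Fintype V] [DecidableRel G.Adj]

theorem sum_lapMatrix_mulVec {R : Type*} [CommRing R] (y : V → R) :
    ∑ v, (G.lapMatrix R *ᵥ y) v = 0 := by
  rw [← one_dotProduct, dotProduct_mulVec, ← (G.isSymm_lapMatrix R).eq, vecMul_transpose]
  exact (G.lapMatrix_mulVec_const_eq_zero (R := R)).symm ▸ zero_dotProduct y

theorem det_updateRow_lapMatrix_ne_zero (hconn : G.Connected) (v₀ : V) {r : V → ℝ}
    (hr : ∑ u, r u ≠ 0) : ((G.lapMatrix ℝ).updateRow v₀ r).det ≠ 0 := by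
  intro hdet
  obtain ⟨y, hy0, hy⟩ := exists_mulVec_eq_zero_iff.mpr hdet
  rw [updateRow_mulVec] at hy
  obtain ⟨hry, hrows⟩ := Function.update_eq_iff.mp hy
  have hLy : G.lapMatrix ℝ *ᵥ y = 0 := by
    have hv₀ := G.sum_lapMatrix_mulVec y
    rw [← Finset.add_sum_erase _ _ (Finset.mem_univ v₀),
      Finset.sum_eq_zero fun v hv => hrows v (Finset.ne_of_mem_erase hv), add_zero] at hv₀
    ext v
    rcases eq_or_ne v v₀ with rfl | hv
    exacts [hv₀, hrows v hv]
  have hconst (v : V) : y v = y v₀ :=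
    (G.lapMatrix_mulVec_eq_zero_iff_forall_reachable.mp hLy) v v₀ (hconn.preconnected v v₀)
  have hsum : (∑ u, r u) * y v₀ = 0 := by
    simpa [dotProduct, hconst, Finset.sum_mul] using hry
  exact hy0 (funext fun v => by rw [hconst, (mul_eq_zero.mp hsum).resolve_left hr, Pi.zero_apply])

theorem charpoly_nbMatrix (h : Fintype.card V ≤ G.edgeFinset.card) :
    (nbMatrix G).charpoly =
      (X ^ 2 - 1) ^ (G.edgeFinset.card - Fintype.card V) * (G.iharaMatrix ℂ[X] X).det := by
  have hc : (X ^ 2 - 1 : ℂ[X]) ≠ 0 := by simpa using X_pow_sub_C_ne_zero two_pos (1 : ℂ)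
  have hτ : (scalar G.Dart (X : ℂ[X]) - G.dartSymm.permMatrix ℂ[X]).det =
      (X ^ 2 - 1) ^ G.edgeFinset.card := by
    rw [← eval_charpoly, charpoly_permMatrix_of_involutive (fun d => Dart.symm_symm d)
      Dart.symm_ne G.dart_card_eq_twice_card_edges]
    simp
  have hIB := G.det_scalar_sub_mul_det_scalar_sub_dartSymm ℂ[X] X
  rw [← G.nbMatrix_map ℂ[X] C, hτ, G.dart_card_eq_twice_card_edges] at hIB
  apply mul_left_cancel₀ (pow_ne_zero (Fintype.card V + G.edgeFinset.card) hc)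
  calc _ = (X ^ 2 - 1 : ℂ[X]) ^ Fintype.card V *
        ((nbMatrix G).charpoly * (X ^ 2 - 1) ^ G.edgeFinset.card) := by ring
    _ = _ := hIB
    _ = _ := by
      rw [← mul_assoc, ← pow_add]
      congr 2
      omega

theorem eval_one_det_updateRow_iharaMatrix (v₀ : V) :
    eval 1 ((G.iharaMatrix ℂ[X] X).updateRow v₀ fun u => (X : ℂ[X]) + 1 - G.degree u).det =
      ((G.lapMatrix ℝ).updateRow v₀ fun u => 2 - G.degree u).det := by
  have hℂ := G.map_det_updateRow_iharaMatrix ℂ[X] (evalRingHom 1) X v₀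
  have hℝ := G.map_det_updateRow_iharaMatrix ℝ Complex.ofRealHom 1 v₀
  simp only [coe_evalRingHom, eval_X, map_one, one_add_one_eq_two, iharaMatrix_one] at hℂ hℝ
  rw [hℂ, ← hℝ, Complex.ofRealHom_eq_coe]

end

end SimpleGraph

theorem nbMatrix_algebraic_multiplicity_one
    [DecidableEq V] [Fintype V] (G : SimpleGraph V) [DecidableRel G.Adj]
    (hconn : G.Connected) (hm : Fintype.card V < G.edgeFinset.card) :
    (nbMatrix G).charpoly.rootMultiplicity 1
      = G.edgeFinset.card - Fintype.card V + 1 := by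
  obtain ⟨v₀⟩ := hconn.nonempty
  have hQ : eval 1 ((G.iharaMatrix ℂ[X] X).updateRow v₀
      fun u => (X : ℂ[X]) + 1 - G.degree u).det ≠ 0 := by
    rw [G.eval_one_det_updateRow_iharaMatrix v₀, Complex.ofReal_ne_zero]
    refine G.det_updateRow_lapMatrix_ne_zero hconn v₀ ?_
    rw [G.sum_two_sub_degree]
    exact mul_ne_zero two_ne_zero (sub_ne_zero.mpr (by exact_mod_cast hm.ne))
  rw [G.charpoly_nbMatrix hm.le, G.det_iharaMatrix ℂ[X] X v₀,
    rootMultiplicity_one_X_sq_sub_one_pow_mul hQ]
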